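/- arXiv:2311.10289 — 2 statements merged into one kernel-verified Lean document; each statement's English description precedes it below -/
import Mathlib

section
/- (Normalization of the limiting bubble, conclusion of Lemma 4.2(ii)) Let 0 ≤ β < N and define Φ : ℝ^N → ℝ by Φ(x) = -((N-1)/(λ_N (1 - β/N))) log( 1 + λ_N F^o(x)^{(N/(N-1))(1 - β/N)} / ( N^{N/(N-1)} (1 - β/N)^{1/(N-1)} ) ). Then ∫_{ℝ^N} F^o(x)^{-β} exp( λ_N (1 - β/N) (N/(N-1)) Φ(x) ) dx = 1. -/
/-
Write `r = F^o(x)`. The factor `λ_N (1 - β/N) N/(N-1)` turns `exp(... Φ)` into `(1 + a r^p)^(-N)`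
with `p = (N - β)/(N - 1)` and `a^(N-1) = N κ_N / (N - β)`. Since `F^o` is positively homogeneous
and `{F^o ≤ 1}` has volume `κ_N`, the push-forward of Lebesgue measure under `F^o` is
`N κ_N t^(N-1) dt` on `(0, ∞)`. The resulting integrand `N κ_N t^(p(N-1)-1) (1 + a t^p)^(-N)` has
the primitive `(N κ_N / (N - β)) (t^p / (1 + a t^p))^(N-1)`, which increases from `0` at `t = 0`
to `N κ_N / ((N - β) a^(N-1)) = 1` at infinity.
-/

open MeasureTheory Real Set
open scoped RealInnerProductSpace ENNReal

noncomputable section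

abbrev Euc (N : ℕ) := EuclideanSpace ℝ (Fin N)

open Filter Topology Module Metric
open scoped Pointwise

theorem MeasureTheory.Measure.ext_of_Iic_of_ne_top {μ ν : Measure ℝ} (hμ : ∀ r, μ (Iic r) ≠ ∞)
    (h : ∀ r, μ (Iic r) = ν (Iic r)) : μ = ν := by
  refine Measure.ext_of_Ioc' μ ν (fun a b _ ↦ ne_top_of_le_ne_top (hμ b)
    (measure_mono Ioc_subset_Iic_self)) fun a b hab ↦ ?_
  have hν : ν (Iic a) ≠ ∞ := h a ▸ hμ a
  rw [← Iic_sdiff_Iic, measure_sdiff (Iic_subset_Iic.2 hab.le) nullMeasurableSet_Iic (hμ a),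
    measure_sdiff (Iic_subset_Iic.2 hab.le) nullMeasurableSet_Iic hν, h a, h b]

theorem withDensity_pow_Iic (d : ℕ) (hd : d ≠ 0) (V : ℝ≥0∞) (r : ℝ) :
    (volume.restrict (Ioi (0 : ℝ))).withDensity (fun t ↦ V * ENNReal.ofReal (d * t ^ (d - 1)))
      (Iic r) = ENNReal.ofReal (max r 0 ^ d) * V := by
  rw [withDensity_apply _ measurableSet_Iic, Measure.restrict_restrict measurableSet_Iic,
    Iic_inter_Ioi, lintegral_const_mul _ (by fun_prop), mul_comm]
  rcases lt_or_ge 0 r with hr | hr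
  · have hderiv : ∀ t, HasDerivAt (fun t : ℝ ↦ t ^ d) (d * t ^ (d - 1)) t := fun t ↦ by
      simpa using hasDerivAt_pow d t
    rw [max_eq_left hr.le, ← ofReal_integral_eq_lintegral_ofReal,
      ← intervalIntegral.integral_of_le hr.le,
      intervalIntegral.integral_eq_sub_of_hasDerivAt (fun t _ ↦ hderiv t)
        (by apply Continuous.intervalIntegrable; fun_prop), zero_pow hd, sub_zero]
    · exact (by fun_prop : Continuous fun t : ℝ ↦ d * t ^ (d - 1)).integrableOn_Ioc
    · filter_upwards [ae_restrict_mem measurableSet_Ioc] with t ht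
      exact mul_nonneg d.cast_nonneg (pow_nonneg ht.1.le _)
  · rw [max_eq_right hr, zero_pow hd, Ioc_eq_empty (not_lt.2 hr)]
    simp

section Homogeneous

variable {E : Type*} [NormedAddCommGroup E] [NormedSpace ℝ E] {f : E → ℝ}

theorem setOf_le_eq_smul_of_homogeneous (hf : ∀ t, 0 < t → ∀ x, f (t • x) = t * f x) {r : ℝ}
    (hr : 0 < r) : {x | f x ≤ r} = r • {x | f x ≤ 1} := by
  ext x
  rw [mem_smul_set_iff_inv_smul_mem₀ hr.ne', mem_ofPred_eq, mem_ofPred_eq, hf _ (inv_pos.2 hr),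
    inv_mul_le_one₀ hr]

variable [FiniteDimensional ℝ E] [Nontrivial E] [MeasurableSpace E] [BorelSpace E]
  (μ : Measure E) [μ.IsAddHaarMeasure]

theorem addHaar_setOf_le_of_homogeneous (hf : ∀ t, 0 < t → ∀ x, f (t • x) = t * f x)
    (hV : μ {x | f x ≤ 1} ≠ ∞) (r : ℝ) :
    μ {x | f x ≤ r} = ENNReal.ofReal (max r 0 ^ finrank ℝ E) * μ {x | f x ≤ 1} := by
  have hpos : ∀ r, 0 < r → μ {x | f x ≤ r} = ENNReal.ofReal (r ^ finrank ℝ E) * μ {x | f x ≤ 1} :=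
    fun r hr ↦ by rw [setOf_le_eq_smul_of_homogeneous hf hr, Measure.addHaar_smul,
      abs_of_pos (by positivity)]
  rcases lt_or_ge 0 r with hr | hr
  · rw [max_eq_left hr.le, hpos r hr]
  rw [max_eq_right hr, zero_pow finrank_pos.ne', ENNReal.ofReal_zero, zero_mul]
  have hlim : Tendsto (fun ε : ℝ ↦ ENNReal.ofReal (ε ^ finrank ℝ E) * μ {x | f x ≤ 1})
      (𝓝[>] 0) (𝓝 0) := by
    have : Tendsto (fun ε : ℝ ↦ ENNReal.ofReal (ε ^ finrank ℝ E)) (𝓝[>] 0) (𝓝 0) := by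
      simpa using (ENNReal.tendsto_ofReal ((continuous_pow (finrank ℝ E)).tendsto' 0 0
        (zero_pow finrank_pos.ne'))).mono_left nhdsWithin_le_nhds
    simpa using ENNReal.Tendsto.mul_const this (Or.inr hV)
  refine le_antisymm (ge_of_tendsto hlim ?_) bot_le
  filter_upwards [self_mem_nhdsWithin] with ε hε
  exact (hpos ε hε).symm ▸ measure_mono fun x hx ↦ le_trans hx (hr.trans (le_of_lt hε))

theorem map_eq_withDensity_of_homogeneous (hfm : Measurable f)
    (hf : ∀ t, 0 < t → ∀ x, f (t • x) = t * f x) (hV : μ {x | f x ≤ 1} ≠ ∞) :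
    μ.map f = (volume.restrict (Ioi 0)).withDensity
      (fun t ↦ μ {x | f x ≤ 1} * ENNReal.ofReal (finrank ℝ E * t ^ (finrank ℝ E - 1))) := by
  have hcdf (r : ℝ) :
      μ.map f (Iic r) = ENNReal.ofReal (max r 0 ^ finrank ℝ E) * μ {x | f x ≤ 1} := by
    rw [Measure.map_apply hfm measurableSet_Iic]
    exact addHaar_setOf_le_of_homogeneous μ hf hV r
  refine Measure.ext_of_Iic_of_ne_top (fun r ↦ ?_) fun r ↦ ?_
  · rw [hcdf]
    exact ENNReal.mul_ne_top ENNReal.ofReal_ne_top hV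
  · rw [hcdf, withDensity_pow_Iic _ finrank_pos.ne']

theorem lintegral_comp_of_homogeneous (hfm : Measurable f)
    (hf : ∀ t, 0 < t → ∀ x, f (t • x) = t * f x) (hV : μ {x | f x ≤ 1} ≠ ∞) {g : ℝ → ℝ≥0∞}
    (hg : Measurable g) :
    ∫⁻ x, g (f x) ∂μ = ∫⁻ t in Ioi 0,
      μ {x | f x ≤ 1} * ENNReal.ofReal (finrank ℝ E * t ^ (finrank ℝ E - 1)) * g t := by
  rw [← lintegral_map hg hfm, map_eq_withDensity_of_homogeneous μ hfm hf hV,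
    lintegral_withDensity_eq_lintegral_mul _ (by fun_prop) hg]
  rfl

end Homogeneous

section HomogeneousBounds

variable {E : Type*} [NormedAddCommGroup E] [NormedSpace ℝ E] {F : E → ℝ}

theorem eq_norm_mul_of_homogeneous (hF : ∀ t, 0 ≤ t → ∀ x, F (t • x) = t * F x) (x : E) :
    F x = ‖x‖ * F (‖x‖⁻¹ • x) := by
  rcases eq_or_ne x 0 with rfl | hx
  · simpa using hF 0 le_rfl 0
  · rw [← hF _ (norm_nonneg x), smul_inv_smul₀ (norm_ne_zero_iff.2 hx)]

variable [FiniteDimensional ℝ E] [Nontrivial E] (hF : ∀ t, 0 ≤ t → ∀ x, F (t • x) = t * F x)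
  (hcont : ContinuousOn F (sphere 0 1)) (hpos : ∀ x, x ≠ 0 → 0 < F x)
include hF hcont hpos

theorem exists_pos_mul_norm_le_of_homogeneous : ∃ c > 0, ∀ x, c * ‖x‖ ≤ F x := by
  obtain ⟨u, hu, hmin⟩ := (isCompact_sphere (0 : E) 1).exists_isMinOn
    (NormedSpace.sphere_nonempty.2 zero_le_one) hcont
  refine ⟨F u, hpos u (ne_zero_of_mem_unit_sphere ⟨u, hu⟩), fun x ↦ ?_⟩
  rcases eq_or_ne x 0 with rfl | hx
  · simpa using (hF 0 le_rfl 0).ge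
  · rw [eq_norm_mul_of_homogeneous hF x, mul_comm (F u)]
    exact mul_le_mul_of_nonneg_left (hmin (mem_sphere_zero_iff_norm.2 (norm_smul_inv_norm hx)))
      (norm_nonneg x)

theorem exists_le_pos_mul_norm_of_homogeneous : ∃ C > 0, ∀ x, F x ≤ C * ‖x‖ := by
  obtain ⟨u, hu, hmax⟩ := (isCompact_sphere (0 : E) 1).exists_isMaxOn
    (NormedSpace.sphere_nonempty.2 zero_le_one) hcont
  refine ⟨F u, hpos u (ne_zero_of_mem_unit_sphere ⟨u, hu⟩), fun x ↦ ?_⟩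
  rcases eq_or_ne x 0 with rfl | hx
  · simpa using (hF 0 le_rfl 0).le
  · rw [eq_norm_mul_of_homogeneous hF x, mul_comm (F u)]
    exact mul_le_mul_of_nonneg_left (hmax (mem_sphere_zero_iff_norm.2 (norm_smul_inv_norm hx)))
      (norm_nonneg x)

theorem exists_closedBall_subset_setOf_le_one_subset_closedBall :
    ∃ ρ > 0, ∃ R > 0, closedBall 0 ρ ⊆ {x | F x ≤ 1} ∧ {x | F x ≤ 1} ⊆ closedBall 0 R := by
  obtain ⟨c, hc, hcF⟩ := exists_pos_mul_norm_le_of_homogeneous hF hcont hpos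
  obtain ⟨C, hC, hCF⟩ := exists_le_pos_mul_norm_of_homogeneous hF hcont hpos
  refine ⟨C⁻¹, inv_pos.2 hC, c⁻¹, inv_pos.2 hc, fun x hx ↦ ?_, fun x hx ↦ ?_⟩
  · rw [mem_closedBall_zero_iff, ← mul_one C⁻¹, le_inv_mul_iff₀ hC] at hx
    exact (hCF x).trans hx
  · rw [mem_closedBall_zero_iff, ← mul_one c⁻¹, le_inv_mul_iff₀ hc]
    exact (hcF x).trans hx

end HomogeneousBounds

section SupportFunction

variable {E : Type*} [NormedAddCommGroup E] [InnerProductSpace ℝ E]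

def supportFunction (K : Set E) (x : E) : ℝ := sSup {r | ∃ ξ ∈ K, r = ⟪x, ξ⟫}

variable {K : Set E} {R : ℝ}

theorem inner_le_mul_norm_of_subset_closedBall (hK : K ⊆ closedBall 0 R) (x : E) {ξ : E}
    (hξ : ξ ∈ K) : ⟪x, ξ⟫ ≤ R * ‖x‖ :=
  (real_inner_le_norm x ξ).trans <| by
    rw [mul_comm]
    exact mul_le_mul_of_nonneg_right (mem_closedBall_zero_iff.1 (hK hξ)) (norm_nonneg x)

theorem bddAbove_inner_of_subset_closedBall (hK : K ⊆ closedBall 0 R) (x : E) :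
    BddAbove {r | ∃ ξ ∈ K, r = ⟪x, ξ⟫} := by
  refine ⟨R * ‖x‖, ?_⟩
  rintro r ⟨ξ, hξ, rfl⟩
  exact inner_le_mul_norm_of_subset_closedBall hK x hξ

theorem inner_le_supportFunction (hK : K ⊆ closedBall 0 R) (x : E) {ξ : E} (hξ : ξ ∈ K) :
    ⟪x, ξ⟫ ≤ supportFunction K x :=
  le_csSup (bddAbove_inner_of_subset_closedBall hK x) ⟨ξ, hξ, rfl⟩

theorem supportFunction_le_mul_norm (hK : K ⊆ closedBall 0 R) (hne : K.Nonempty) (x : E) :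
    supportFunction K x ≤ R * ‖x‖ := by
  obtain ⟨ξ₀, hξ₀⟩ := hne
  refine csSup_le ⟨_, ξ₀, hξ₀, rfl⟩ ?_
  rintro r ⟨ξ, hξ, rfl⟩
  exact inner_le_mul_norm_of_subset_closedBall hK x hξ

theorem supportFunction_le_add_mul_norm_sub (hK : K ⊆ closedBall 0 R) (hne : K.Nonempty)
    (x y : E) : supportFunction K x ≤ supportFunction K y + R * ‖x - y‖ := by
  obtain ⟨ξ₀, hξ₀⟩ := hne
  refine csSup_le ⟨_, ξ₀, hξ₀, rfl⟩ ?_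
  rintro r ⟨ξ, hξ, rfl⟩
  calc ⟪x, ξ⟫ = ⟪y, ξ⟫ + ⟪x - y, ξ⟫ := by rw [inner_sub_left]; ring
    _ ≤ supportFunction K y + R * ‖x - y‖ := add_le_add (inner_le_supportFunction hK y hξ)
        (inner_le_mul_norm_of_subset_closedBall hK _ hξ)

theorem continuous_supportFunction (hK : K ⊆ closedBall 0 R) (hne : K.Nonempty) :
    Continuous (supportFunction K) := by
  obtain ⟨ξ₀, hξ₀⟩ := hne
  have hR : 0 ≤ R := (norm_nonneg _).trans (mem_closedBall_zero_iff.1 (hK hξ₀))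
  refine (LipschitzWith.of_le_add_mul R.toNNReal fun x y ↦ ?_).continuous
  rw [Real.coe_toNNReal R hR, dist_eq_norm]
  exact supportFunction_le_add_mul_norm_sub hK ⟨ξ₀, hξ₀⟩ x y

theorem supportFunction_smul {t : ℝ} (ht : 0 < t) (x : E) :
    supportFunction K (t • x) = t * supportFunction K x := by
  have : {r | ∃ ξ ∈ K, r = ⟪t • x, ξ⟫} = t • {r | ∃ ξ ∈ K, r = ⟪x, ξ⟫} := by
    ext r
    simp only [mem_smul_set, real_inner_smul_left]
    aesop
  rw [supportFunction, this, Real.sSup_smul_of_nonneg ht.le, smul_eq_mul, supportFunction]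

theorem mul_norm_le_supportFunction (hK : K ⊆ closedBall 0 R) {ρ : ℝ} (hρ : 0 ≤ ρ)
    (hρK : closedBall 0 ρ ⊆ K) (x : E) : ρ * ‖x‖ ≤ supportFunction K x := by
  have hmem : (ρ / ‖x‖) • x ∈ K := hρK <| by
    rcases eq_or_ne x 0 with rfl | hx
    · simpa using hρ
    · rw [mem_closedBall_zero_iff, norm_smul, Real.norm_of_nonneg (by positivity),
        div_mul_cancel₀ _ (norm_ne_zero_iff.2 hx)]
  convert inner_le_supportFunction hK x hmem using 1
  rw [real_inner_smul_right, real_inner_self_eq_norm_sq]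
  rcases eq_or_ne ‖x‖ 0 with hx | hx
  · simp [hx]
  · field_simp

variable [MeasurableSpace E] (μ : Measure E) {ρ : ℝ}

theorem measure_setOf_supportFunction_le_one_ne_top [ProperSpace E] [IsFiniteMeasureOnCompacts μ]
    (hK : K ⊆ closedBall 0 R) (hρ : 0 < ρ)
    (hρK : closedBall 0 ρ ⊆ K) : μ {x | supportFunction K x ≤ 1} ≠ ∞ :=
  ne_top_of_le_ne_top measure_closedBall_lt_top.ne <| measure_mono fun x hx ↦
    mem_closedBall_zero_iff.2 <| (le_inv_mul_iff₀ hρ).2 <| by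
      simpa using (mul_norm_le_supportFunction hK hρ.le hρK x).trans hx

theorem measure_setOf_supportFunction_le_one_pos [μ.IsOpenPosMeasure] (hK : K ⊆ closedBall 0 R)
    (hR : 0 < R)
    (hne : K.Nonempty) : 0 < μ {x | supportFunction K x ≤ 1} :=
  (measure_closedBall_pos μ 0 (inv_pos.2 hR)).trans_le <| measure_mono fun x hx ↦
    (supportFunction_le_mul_norm hK hne x).trans <| by
      simpa using (le_inv_mul_iff₀ hR).1 (by simpa using mem_closedBall_zero_iff.1 hx)

end SupportFunction

section Profile

variable {a p n : ℝ}

theorem rpow_div_one_add_mul_rpow (ha : 0 < a) {t : ℝ} (ht : 0 < t) :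
    t ^ p / (1 + a * t ^ p) = (a + t ^ (-p))⁻¹ := by
  have : t ^ (-p) * t ^ p = 1 := by rw [← rpow_add ht]; simp
  have h1 : 0 < t ^ p := rpow_pos_of_pos ht p
  field_simp
  linear_combination this

theorem hasDerivAt_add_rpow_neg_rpow (ha : 0 < a) {t : ℝ} (ht : 0 < t) :
    HasDerivAt (fun t ↦ (a + t ^ (-p)) ^ (1 - n))
      (p * (n - 1) * (t ^ (p * (n - 1) - 1) * (1 + a * t ^ p) ^ (-n))) t := by
  have hb : 0 < a + t ^ (-p) := by positivity
  have := (((hasDerivAt_rpow_const (p := -p) (Or.inl ht.ne')).const_add a).rpow_const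
    (p := 1 - n) (Or.inl hb.ne'))
  convert this using 1
  have e1 : 1 + a * t ^ p = t ^ p * (a + t ^ (-p)) := by
    rw [mul_add, ← rpow_add ht]; simp; ring
  rw [e1, mul_rpow (by positivity) hb.le, ← rpow_mul ht.le, show 1 - n - 1 = -n by ring,
    show -p - 1 = p * (n - 1) - 1 + p * -n by ring, rpow_add ht]
  ring

theorem lintegral_rpow_mul_one_add_rpow_neg (ha : 0 < a) (hp : 0 < p) (hn : 1 < n) :
    ∫⁻ t in Ioi 0, ENNReal.ofReal (t ^ (p * (n - 1) - 1) * (1 + a * t ^ p) ^ (-n)) =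
      ENNReal.ofReal (a ^ (1 - n) / (p * (n - 1))) := by
  set g : ℝ → ℝ := fun t ↦ t ^ (p * (n - 1) - 1) * (1 + a * t ^ p) ^ (-n)
  set H : ℝ → ℝ := fun t ↦ (t ^ p / (1 + a * t ^ p)) ^ (n - 1) / (p * (n - 1))
  have hpn : 0 < p * (n - 1) := mul_pos hp (by linarith)
  have hH : ∀ t, 0 < t → H t = (a + t ^ (-p)) ^ (1 - n) / (p * (n - 1)) := fun t ht ↦ by
    simp only [H, rpow_div_one_add_mul_rpow ha ht, inv_rpow (by positivity : 0 ≤ a + t ^ (-p)),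
      ← rpow_neg (by positivity : 0 ≤ a + t ^ (-p)), neg_sub]
  have hderiv : ∀ t ∈ Ioi (0 : ℝ), HasDerivAt H (g t) t := fun t ht ↦ by
    have := (hasDerivAt_add_rpow_neg_rpow (p := p) (n := n) ha ht).div_const (p * (n - 1))
    rw [mul_div_cancel_left₀ _ hpn.ne'] at this
    exact this.congr_of_eventuallyEq ((eventually_gt_nhds ht).mono hH)
  have hg : ∀ t ∈ Ioi (0 : ℝ), 0 ≤ g t := fun t ht ↦ by
    have : (0 : ℝ) < t := ht
    positivity
  have hcont : ContinuousWithinAt H (Ici 0) 0 := by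
    have hpow : ContinuousAt (fun t : ℝ ↦ t ^ p) 0 := continuousAt_rpow_const _ _ (Or.inr hp.le)
    refine ((hpow.div (continuousAt_const.add (continuousAt_const.mul hpow)) ?_).rpow_const
      (Or.inr (by linarith))).div_const _ |>.continuousWithinAt
    simp [zero_rpow hp.ne']
  have hlim : Tendsto H atTop (𝓝 (a ^ (1 - n) / (p * (n - 1)))) := by
    refine Tendsto.congr' (EventuallyEq.symm ((eventually_gt_atTop 0).mono hH)) ?_
    simpa using (((tendsto_rpow_neg_atTop hp).const_add a).rpow_const (Or.inl (by simpa using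
      ha.ne'))).div_const (p * (n - 1))
  have hH0 : H 0 = 0 := by
    simp [H, zero_rpow hp.ne', zero_rpow (by linarith : n - 1 ≠ 0)]
  rw [← ofReal_integral_eq_lintegral_ofReal (integrableOn_Ioi_deriv_of_nonneg hcont hderiv hg hlim)
    ((ae_restrict_iff' measurableSet_Ioi).2 (Eventually.of_forall hg)),
    integral_Ioi_of_hasDerivAt_of_nonneg hcont hderiv hg hlim, hH0, sub_zero]

end Profile

section Bubble

/-- The integrand `F^o(x)^(-β) exp(λ_N (1 - β/N) (N/(N-1)) Φ(x))` as a function of `r = F^o(x)`. -/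
def bubbleProfile (n lam β r : ℝ) : ℝ :=
  r ^ (-β) * exp (lam * (1 - β / n) * (n / (n - 1)) * (-((n - 1) / (lam * (1 - β / n))) *
    log (1 + lam * r ^ (n / (n - 1) * (1 - β / n)) /
      (n ^ (n / (n - 1)) * (1 - β / n) ^ (1 / (n - 1))))))

variable {n lam β : ℝ}

theorem bubbleProfile_eq (hn : 1 < n) (hβ : β < n) (hlam : 0 < lam) {r : ℝ} (hr : 0 ≤ r) :
    bubbleProfile n lam β r = r ^ (-β) *
      (1 + lam / (n ^ (n / (n - 1)) * (1 - β / n) ^ (1 / (n - 1))) * r ^ ((n - β) / (n - 1)))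
        ^ (-n) := by
  have hβ' : 0 < 1 - β / n := by rw [sub_pos, div_lt_one (by linarith)]; exact hβ
  have hq : n / (n - 1) * (1 - β / n) = (n - β) / (n - 1) := by
    field_simp
  have hX : 0 < 1 + lam / (n ^ (n / (n - 1)) * (1 - β / n) ^ (1 / (n - 1))) *
      r ^ ((n - β) / (n - 1)) := by positivity
  rw [bubbleProfile, hq, mul_div_right_comm, rpow_def_of_pos hX]
  congr 2
  generalize log _ = L
  have : n - β ≠ 0 := by linarith
  have : n - 1 ≠ 0 := by linarith
  field_simp

theorem lintegral_bubbleProfile (hn : 1 < n) (hβ : β < n) {κ : ℝ} (hκ : 0 < κ)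
    (hlam : lam = n ^ (n / (n - 1)) * κ ^ (1 / (n - 1))) :
    ∫⁻ t in Ioi 0, ENNReal.ofReal κ * ENNReal.ofReal (n * t ^ (n - 1)) *
      ENNReal.ofReal (bubbleProfile n lam β t) = 1 := by
  have hβ' : 0 < 1 - β / n := by rw [sub_pos, div_lt_one (by linarith)]; exact hβ
  have hn1 : n - 1 ≠ 0 := by linarith
  obtain ⟨p, hp_def⟩ : ∃ p, p = (n - β) / (n - 1) := ⟨_, rfl⟩
  have hp : 0 < p := hp_def ▸ div_pos (by linarith) (by linarith)
  have hpn : p * (n - 1) = n - β := hp_def ▸ div_mul_cancel₀ _ hn1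
  have hlam_pos : 0 < lam := hlam ▸ by positivity
  obtain ⟨a, ha_def⟩ : ∃ a, a = lam / (n ^ (n / (n - 1)) * (1 - β / n) ^ (1 / (n - 1))) := ⟨_, rfl⟩
  have ha : 0 < a := ha_def ▸ by positivity
  have ha_pow : a ^ (n - 1) = n * κ / (n - β) := by
    have hroot : ∀ x y : ℝ, 0 ≤ x → (x ^ (y / (n - 1))) ^ (n - 1) = x ^ y := fun x y hx ↦ by
      rw [← rpow_mul hx, div_mul_cancel₀ _ hn1]
    rw [ha_def, hlam, div_rpow (by positivity) (by positivity), mul_rpow (by positivity)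
      (by positivity), mul_rpow (by positivity) (by positivity), hroot _ _ (by positivity),
      hroot _ _ hκ.le, hroot _ _ (by positivity), rpow_one, rpow_one]
    have : n - β ≠ 0 := by linarith
    field_simp
  calc _ = ∫⁻ t in Ioi 0, ENNReal.ofReal (n * κ) *
        ENNReal.ofReal (t ^ (p * (n - 1) - 1) * (1 + a * t ^ p) ^ (-n)) := by
        refine setLIntegral_congr_fun measurableSet_Ioi fun t ht ↦ ?_
        have ht : 0 < t := ht
        rw [bubbleProfile_eq hn hβ hlam_pos ht.le, ← ha_def, ← hp_def, ← ENNReal.ofReal_mul hκ.le,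
          ← ENNReal.ofReal_mul (by positivity), ← ENNReal.ofReal_mul (by positivity), hpn,
          show n - β - 1 = (n - 1) + -β by ring, rpow_add ht]
        ring_nf
    _ = ENNReal.ofReal (n * κ) * ENNReal.ofReal (a ^ (1 - n) / (p * (n - 1))) := by
        rw [lintegral_const_mul' _ _ ENNReal.ofReal_ne_top,
          lintegral_rpow_mul_one_add_rpow_neg ha hp hn]
    _ = 1 := by
        have : n - β ≠ 0 := by linarith
        rw [← ENNReal.ofReal_mul (by positivity), show 1 - n = -(n - 1) by ring, rpow_neg ha.le,
          ha_pow, hpn, show n * κ * ((n * κ / (n - β))⁻¹ / (n - β)) = 1 by field_simp,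
          ENNReal.ofReal_one]

end Bubble

theorem stmt14_general {N : ℕ} (hN : 2 ≤ N)
    (F Fo : Euc N → ℝ)
    (hFhom : ∀ (t : ℝ) (x : Euc N), F (t • x) = |t| * F x)
    (hFsmooth : ContDiffOn ℝ 2 F {(0 : Euc N)}ᶜ)
    (hFpos : ∀ x : Euc N, x ≠ 0 → 0 < F x)
    (hFo : ∀ x, Fo x = sSup {r : ℝ | ∃ ξ, F ξ ≤ 1 ∧ r = ⟪x, ξ⟫})
    (κ : ℝ) (hκ : κ = (volume {x : Euc N | Fo x ≤ 1}).toReal)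
    (lam : ℝ) (hlam : lam = (N : ℝ) ^ ((N : ℝ) / ((N : ℝ) - 1)) * κ ^ (1 / ((N : ℝ) - 1)))
    (β : ℝ) (hβN : β < N)
    (Φ : Euc N → ℝ)
    (hΦ : ∀ x, Φ x = -(((N : ℝ) - 1) / (lam * (1 - β / N))) *
      Real.log (1 + lam * Fo x ^ (((N : ℝ) / ((N : ℝ) - 1)) * (1 - β / N)) /
        ((N : ℝ) ^ ((N : ℝ) / ((N : ℝ) - 1)) * (1 - β / N) ^ (1 / ((N : ℝ) - 1))))) :
    ∫⁻ x : Euc N, ENNReal.ofReal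
      (Fo x ^ (-β) * Real.exp (lam * (1 - β / N) * ((N : ℝ) / ((N : ℝ) - 1)) * Φ x)) = 1 := by
  have : Nonempty (Fin N) := ⟨⟨0, by omega⟩⟩
  have hF : ∀ t, 0 ≤ t → ∀ x, F (t • x) = t * F x := fun t ht x ↦ by rw [hFhom, abs_of_nonneg ht]
  obtain ⟨ρ, hρ, R, hR, hρK, hKR⟩ := exists_closedBall_subset_setOf_le_one_subset_closedBall hF
    (hFsmooth.continuousOn.mono fun x hx ↦ ne_zero_of_mem_unit_sphere ⟨x, hx⟩) hFpos
  obtain rfl : Fo = supportFunction {ξ | F ξ ≤ 1} := funext hFo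
  have hne : {ξ | F ξ ≤ 1}.Nonempty := ⟨0, hρK (mem_closedBall_self hρ.le)⟩
  have hV := measure_setOf_supportFunction_le_one_ne_top volume hKR hρ hρK
  have hκ_pos : 0 < κ :=
    hκ ▸ ENNReal.toReal_pos (measure_setOf_supportFunction_le_one_pos volume hKR hR hne).ne' hV
  calc _ = ∫⁻ x, ENNReal.ofReal (bubbleProfile N lam β (supportFunction {ξ | F ξ ≤ 1} x)) :=
        lintegral_congr fun x ↦ by rw [hΦ]; rfl
    _ = ∫⁻ t in Ioi 0, volume {x | supportFunction {ξ | F ξ ≤ 1} x ≤ 1} *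
          ENNReal.ofReal (finrank ℝ (Euc N) * t ^ (finrank ℝ (Euc N) - 1)) *
          ENNReal.ofReal (bubbleProfile N lam β t) :=
        lintegral_comp_of_homogeneous volume (continuous_supportFunction hKR hne).measurable
          (fun t ht x ↦ supportFunction_smul ht x) hV
          (g := fun t ↦ ENNReal.ofReal (bubbleProfile N lam β t))
          (by unfold bubbleProfile; fun_prop)
    _ = ∫⁻ t in Ioi 0, ENNReal.ofReal κ * ENNReal.ofReal (N * t ^ ((N : ℝ) - 1)) *
          ENNReal.ofReal (bubbleProfile N lam β t) := by
        rw [finrank_euclideanSpace_fin, hκ, ENNReal.ofReal_toReal hV]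
        refine lintegral_congr fun t ↦ ?_
        rw [← rpow_natCast, Nat.cast_sub (by omega), Nat.cast_one]
    _ = 1 := lintegral_bubbleProfile (by exact_mod_cast hN) hβN hκ_pos hlam

/-- Normalization of the limiting bubble (conclusion of Lemma 4.2(ii)):
`∫_{ℝ^N} F^o(x)^{-β} exp(λ_N (1-β/N) (N/(N-1)) Φ(x)) dx = 1`. -/
theorem stmt14 {N : ℕ} (hN : 2 ≤ N)
    (F Fo : Euc N → ℝ)
    (hF0 : ∀ x, 0 ≤ F x)
    (hFconv : ConvexOn ℝ Set.univ F)
    (hFeven : ∀ x, F (-x) = F x)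
    (hFhom : ∀ (t : ℝ) (x : Euc N), F (t • x) = |t| * F x)
    (hFsmooth : ContDiffOn ℝ 2 F {(0 : Euc N)}ᶜ)
    (hFpos : ∀ x : Euc N, x ≠ 0 → 0 < F x)
    (hFo : ∀ x, Fo x = sSup {r : ℝ | ∃ ξ, F ξ ≤ 1 ∧ r = ⟪x, ξ⟫})
    (κ : ℝ) (hκ : κ = (volume {x : Euc N | Fo x ≤ 1}).toReal)
    (lam : ℝ) (hlam : lam = (N : ℝ) ^ ((N : ℝ) / ((N : ℝ) - 1)) * κ ^ (1 / ((N : ℝ) - 1)))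
    (β : ℝ) (hβ0 : 0 ≤ β) (hβN : β < N)
    (Φ : Euc N → ℝ)
    (hΦ : ∀ x, Φ x = -(((N : ℝ) - 1) / (lam * (1 - β / N))) *
      Real.log (1 + lam * Fo x ^ (((N : ℝ) / ((N : ℝ) - 1)) * (1 - β / N)) /
        ((N : ℝ) ^ ((N : ℝ) / ((N : ℝ) - 1)) * (1 - β / N) ^ (1 / ((N : ℝ) - 1))))) :
    ∫⁻ x : Euc N, ENNReal.ofReal
      (Fo x ^ (-β) * Real.exp (lam * (1 - β / N) * ((N : ℝ) / ((N : ℝ) - 1)) * Φ x)) = 1 :=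
  stmt14_general hN F Fo hFhom hFsmooth hFpos hFo κ hκ lam hlam β hβN Φ hΦ

end
end

section
/- (Capacity of the anisotropic annulus, explicit minimizer energy) Let 0 < ρ < δ and a, b ∈ ℝ, and define h on the annulus {x : ρ < F^o(x) < δ} by h(x) = ( a (log F^o(x) - log ρ) + b (log δ - log F^o(x)) ) / (log δ - log ρ), so that h equals a on {F^o = δ} and b on {F^o = ρ}. Then ∫_{{ρ < F^o(x) < δ}} F(∇h(x))^N dx = N κ_N |b - a|^N / (log(δ/ρ))^{N-1}. -/
open MeasureTheory Real Set
open scoped RealInnerProductSpace ENNReal Pointwise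

noncomputable section

/-!
`dualGauge F` is the polar function `F^o`. Since `F^o` is convex and positively 1-homogeneous,
its gradient `η` at `x ≠ 0` satisfies `⟪η, x⟫ = F^o(x)` (Euler) and `⟪η, y⟫ ≤ F^o(y)` for all `y`
(subgradient inequality). By Hahn–Banach the latter forces `F(η) ≤ 1`, while
`⟪x, η⟫ ≤ F^o(x) F(η)` forces `F(η) ≥ 1`; hence `F(∇(φ ∘ F^o)) = |φ' ∘ F^o|`, and for the
logarithmic profile `h` the integrand is `(|b - a| / log (δ / ρ))^N F^o(x)^{-N}`.
Scaling of Haar measure gives `|{F^o ≤ t}| = κ t^N`, so `F^o` pushes Lebesgue measure forward to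
`N κ r^{N-1} dr` on `(0, ∞)`, and `∫_{ρ < F^o < δ} F^o(x)^{-N} dx = N κ log (δ / ρ)`.
-/

section Calculus

variable {E : Type*} [NormedAddCommGroup E] [NormedSpace ℝ E] {f : E → ℝ} {f' : E →L[ℝ] ℝ}
  {x : E}

lemma HasFDerivAt.apply_self_of_homogeneous (hf : HasFDerivAt f f' x)
    (hhom : ∀ t : ℝ, 0 < t → f (t • x) = t * f x) : f' x = f x := by
  have hray : HasDerivAt (fun t : ℝ => f (t • x)) (f' x) 1 := by
    have hsmul : HasDerivAt (fun t : ℝ => t • x) x 1 := by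
      simpa using (hasDerivAt_id (1 : ℝ)).smul_const x
    exact (one_smul ℝ x ▸ hf).comp_hasDerivAt (1 : ℝ) hsmul
  have hlin : HasDerivAt (fun t : ℝ => f (t • x)) (f x) 1 := by
    refine (hasDerivAt_mul_const (f x)).congr_of_eventuallyEq ?_
    filter_upwards [Ioi_mem_nhds one_pos] with t ht using hhom t ht
  exact hray.unique hlin

lemma ConvexOn.le_sub_of_hasFDerivAt (hconv : ConvexOn ℝ univ f) (hf : HasFDerivAt f f' x)
    (y : E) : f' (y - x) ≤ f y - f x := by
  have hline : HasDerivAt (f ∘ AffineMap.lineMap x y) (f' (y - x)) (0 : ℝ) :=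
    (AffineMap.lineMap_apply_zero (k := ℝ) x y ▸ hf).comp_hasDerivAt (0 : ℝ)
      AffineMap.hasDerivAt_lineMap
  simpa [slope] using (hconv.comp_affineMap (AffineMap.lineMap x y)).le_slope_of_hasDerivAt
    (mem_univ 0) (mem_univ 1) zero_lt_one hline

end Calculus

structure IsAnisotropicNorm {E : Type*} [NormedAddCommGroup E] [NormedSpace ℝ E]
    (F : E → ℝ) : Prop where
  convexOn : ConvexOn ℝ univ F
  map_smul : ∀ (t : ℝ) (x : E), F (t • x) = |t| * F x
  pos : ∀ x : E, x ≠ 0 → 0 < F x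

namespace IsAnisotropicNorm

section NormedSpace

variable {E : Type*} [NormedAddCommGroup E] [NormedSpace ℝ E] {F : E → ℝ}

lemma map_zero (hF : IsAnisotropicNorm F) : F 0 = 0 := by
  simpa using hF.map_smul 0 0

lemma map_neg (hF : IsAnisotropicNorm F) (x : E) : F (-x) = F x := by
  simpa using hF.map_smul (-1) x

lemma map_smul_of_nonneg (hF : IsAnisotropicNorm F) {t : ℝ} (ht : 0 ≤ t) (x : E) :
    F (t • x) = t * F x := by
  rw [hF.map_smul, abs_of_nonneg ht]

variable [FiniteDimensional ℝ E]

lemma continuous (hF : IsAnisotropicNorm F) : Continuous F :=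
  hF.convexOn.locallyLipschitz.continuous

lemma exists_pos_mul_norm_le (hF : IsAnisotropicNorm F) : ∃ m > 0, ∀ x, m * ‖x‖ ≤ F x := by
  rcases subsingleton_or_nontrivial E with hE | hE
  · exact ⟨1, one_pos, fun x => by simp [Subsingleton.elim x 0, hF.map_zero]⟩
  have hS : (Metric.sphere (0 : E) 1).Nonempty := NormedSpace.sphere_nonempty.mpr zero_le_one
  obtain ⟨z, hz, hmin⟩ :=
    (isCompact_sphere (0 : E) 1).exists_isMinOn hS hF.continuous.continuousOn
  have hz0 : z ≠ 0 := ne_zero_of_mem_unit_sphere ⟨z, hz⟩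
  refine ⟨F z, hF.pos z hz0, fun x => ?_⟩
  rcases eq_or_ne x 0 with rfl | hx
  · simp [hF.map_zero]
  have hnx : 0 < ‖x‖ := norm_pos_iff.mpr hx
  have hu : ‖x‖⁻¹ • x ∈ Metric.sphere (0 : E) 1 := by
    simp [norm_smul, hnx.ne']
  calc F z * ‖x‖ ≤ F (‖x‖⁻¹ • x) * ‖x‖ := by gcongr; exact hmin hu
    _ = F x := by rw [hF.map_smul_of_nonneg (by positivity)]; field_simp

lemma isBounded_setOf_le (hF : IsAnisotropicNorm F) (r : ℝ) :
    Bornology.IsBounded {x | F x ≤ r} := by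
  obtain ⟨m, hm, hle⟩ := hF.exists_pos_mul_norm_le
  refine (Metric.isBounded_closedBall (x := (0 : E)) (r := r / m)).subset fun x hx => ?_
  rw [mem_closedBall_zero_iff, le_div_iff₀ hm, mul_comm]
  exact (hle x).trans hx

end NormedSpace

end IsAnisotropicNorm

section DualGauge

variable {E : Type*} [NormedAddCommGroup E] [InnerProductSpace ℝ E] {F : E → ℝ}

def dualGauge (F : E → ℝ) (x : E) : ℝ := sSup {r : ℝ | ∃ ξ, F ξ ≤ 1 ∧ r = ⟪x, ξ⟫}

namespace IsAnisotropicNorm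

lemma dualGauge_le (hF : IsAnisotropicNorm F) {x : E} {r : ℝ}
    (h : ∀ ξ, F ξ ≤ 1 → ⟪x, ξ⟫ ≤ r) : dualGauge F x ≤ r :=
  csSup_le ⟨0, 0, by simp [hF.map_zero]⟩ fun _ ⟨ξ, hξ, hr⟩ => hr ▸ h ξ hξ

variable [FiniteDimensional ℝ E]

lemma inner_le_dualGauge (hF : IsAnisotropicNorm F) (x : E) {ξ : E} (hξ : F ξ ≤ 1) :
    ⟪x, ξ⟫ ≤ dualGauge F x := by
  obtain ⟨m, hm, hle⟩ := hF.exists_pos_mul_norm_le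
  refine le_csSup ⟨‖x‖ / m, ?_⟩ ⟨ξ, hξ, rfl⟩
  rintro r ⟨ζ, hζ, rfl⟩
  have hζm : ‖ζ‖ ≤ 1 / m := by rw [le_div_iff₀ hm, mul_comm]; exact (hle ζ).trans hζ
  calc ⟪x, ζ⟫ ≤ ‖x‖ * ‖ζ‖ := real_inner_le_norm x ζ
    _ ≤ ‖x‖ * (1 / m) := by gcongr
    _ = ‖x‖ / m := by ring

lemma inner_le_dualGauge_mul (hF : IsAnisotropicNorm F) (x ξ : E) :
    ⟪x, ξ⟫ ≤ dualGauge F x * F ξ := by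
  rcases eq_or_ne ξ 0 with rfl | hξ
  · simp [hF.map_zero]
  have hFξ := hF.pos ξ hξ
  have h := hF.inner_le_dualGauge x (ξ := (F ξ)⁻¹ • ξ)
    (by rw [hF.map_smul_of_nonneg (by positivity), inv_mul_cancel₀ hFξ.ne'])
  rw [real_inner_smul_right, inv_mul_le_iff₀ hFξ] at h
  linarith

lemma dualGauge_smul_le (hF : IsAnisotropicNorm F) {t : ℝ} (ht : 0 ≤ t) (x : E) :
    dualGauge F (t • x) ≤ t * dualGauge F x :=
  hF.dualGauge_le fun ξ hξ => by
    rw [real_inner_smul_left]; exact mul_le_mul_of_nonneg_left (hF.inner_le_dualGauge x hξ) ht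

lemma dualGauge_neg (hF : IsAnisotropicNorm F) (x : E) : dualGauge F (-x) = dualGauge F x := by
  have key : ∀ y : E, dualGauge F (-y) ≤ dualGauge F y := fun y =>
    hF.dualGauge_le fun ξ hξ => by
      rw [inner_neg_left, ← inner_neg_right]
      exact hF.inner_le_dualGauge y (by rwa [hF.map_neg])
  exact le_antisymm (key x) (by simpa using key (-x))

lemma isAnisotropicNorm_dualGauge (hF : IsAnisotropicNorm F) :
    IsAnisotropicNorm (dualGauge F) where
  convexOn := ⟨convex_univ, fun x _ y _ a b ha hb _ => hF.dualGauge_le fun ξ hξ => by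
    rw [inner_add_left, real_inner_smul_left, real_inner_smul_left, smul_eq_mul, smul_eq_mul]
    gcongr <;> exact hF.inner_le_dualGauge _ hξ⟩
  map_smul t x := by
    wlog ht : 0 ≤ t generalizing t x
    · simpa [hF.dualGauge_neg, abs_of_neg (not_le.mp ht)] using this (-t) (-x) (by linarith)
    rw [abs_of_nonneg ht]
    refine le_antisymm (hF.dualGauge_smul_le ht x) ?_
    rcases ht.eq_or_lt with rfl | ht
    · simpa using hF.inner_le_dualGauge 0 (ξ := 0) (by simp [hF.map_zero])
    calc t * dualGauge F x = t * dualGauge F (t⁻¹ • t • x) := by rw [inv_smul_smul₀ ht.ne']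
      _ ≤ t * (t⁻¹ * dualGauge F (t • x)) := by gcongr; exact hF.dualGauge_smul_le (by positivity) _
      _ = dualGauge F (t • x) := by field_simp
  pos x hx := by
    have h := hF.inner_le_dualGauge_mul x x
    rw [real_inner_self_eq_norm_sq] at h
    exact pos_of_mul_pos_left ((pow_pos (norm_pos_iff.mpr hx) 2).trans_le h) (hF.pos x hx).le

lemma apply_le_one_of_inner_le_dualGauge (hF : IsAnisotropicNorm F) {η : E}
    (hη : ∀ y, ⟪η, y⟫ ≤ dualGauge F y) : F η ≤ 1 := by
  by_contra! hgt
  have hK : Convex ℝ {ξ | F ξ ≤ 1} := by simpa using hF.convexOn.convex_le 1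
  obtain ⟨f, u, hfK, hfη⟩ := geometric_hahn_banach_closed_point hK
    (isClosed_le hF.continuous continuous_const) hgt.not_ge
  set y := (InnerProductSpace.toDual ℝ E).symm f
  have hy : ∀ v, ⟪y, v⟫ = f v := fun v => InnerProductSpace.toDual_symm_apply
  have hyu : dualGauge F y ≤ u := hF.dualGauge_le fun ξ hξ => (hy ξ).symm ▸ (hfK ξ hξ).le
  have := hη y
  rw [real_inner_comm, hy] at this
  linarith

lemma apply_gradient_dualGauge (hF : IsAnisotropicNorm F) {x η : E} (hx : x ≠ 0)
    (hd : HasGradientAt (dualGauge F) η x) : F η = 1 := by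
  have hFo := hF.isAnisotropicNorm_dualGauge
  have hd' := hd.hasFDerivAt
  have heuler : ⟪η, x⟫ = dualGauge F x := by
    simpa using hd'.apply_self_of_homogeneous fun t ht => hFo.map_smul_of_nonneg ht.le x
  have hsub : ∀ y, ⟪η, y⟫ ≤ dualGauge F y := fun y => by
    have := hFo.convexOn.le_sub_of_hasFDerivAt hd' y
    rw [InnerProductSpace.toDual_apply_apply, inner_sub_right, heuler] at this
    linarith
  refine le_antisymm (hF.apply_le_one_of_inner_le_dualGauge hsub) ?_
  have := hF.inner_le_dualGauge_mul x η
  rw [real_inner_comm, heuler] at this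
  exact one_le_of_le_mul_left₀ (hFo.pos x hx) this

lemma apply_gradient_comp_dualGauge (hF : IsAnisotropicNorm F) {x : E} (hx : x ≠ 0)
    (hd : DifferentiableAt ℝ (dualGauge F) x) {φ : ℝ → ℝ} {φ' : ℝ}
    (hφ : HasDerivAt φ φ' (dualGauge F x)) :
    F (gradient (fun y => φ (dualGauge F y)) x) = |φ'| := by
  have hcomp : HasGradientAt (fun y => φ (dualGauge F y)) (φ' • gradient (dualGauge F) x) x := by
    rw [hasGradientAt_iff_hasFDerivAt, LinearIsometryEquiv.map_smul]
    exact hφ.comp_hasFDerivAt x hd.hasGradientAt.hasFDerivAt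
  rw [hcomp.gradient, hF.map_smul, hF.apply_gradient_dualGauge hx hd.hasGradientAt, mul_one]

end IsAnisotropicNorm

end DualGauge

lemma MeasureTheory.Measure.ext_of_Iic' (ν₁ ν₂ : Measure ℝ) (hfin : ∀ t, ν₁ (Iic t) ≠ ∞)
    (h : ∀ t, ν₁ (Iic t) = ν₂ (Iic t)) : ν₁ = ν₂ := by
  have hsplit : ∀ (ν : Measure ℝ) {a b : ℝ}, a < b → ν (Iic a) + ν (Ioc a b) = ν (Iic b) :=
    fun ν a b hab => by
      rw [← measure_union (Iic_disjoint_Ioc le_rfl) measurableSet_Ioc, Iic_union_Ioc_eq_Iic hab.le]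
  refine Measure.ext_of_Ioc' ν₁ ν₂ (fun a b hab => ?_) (fun a b hab => ?_)
  · exact ne_top_of_le_ne_top (hfin b) (measure_mono Ioc_subset_Iic_self)
  · rw [← ENNReal.add_right_inj (hfin a), hsplit ν₁ hab, h, h, hsplit ν₂ hab]

namespace IsAnisotropicNorm

open Module

variable {E : Type*} [NormedAddCommGroup E] [NormedSpace ℝ E] [FiniteDimensional ℝ E]
  [MeasurableSpace E] [BorelSpace E] (μ : Measure E) [μ.IsAddHaarMeasure] {g : E → ℝ}

lemma measure_setOf_le [Nontrivial E] (hg : IsAnisotropicNorm g) (t : ℝ) :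
    μ {x | g x ≤ t} = ENNReal.ofReal (max t 0 ^ finrank ℝ E) * μ {x | g x ≤ 1} := by
  rcases le_or_gt t 0 with ht | ht
  · have hsub : {x | g x ≤ t} ⊆ {0} := fun x hx => by
      by_contra hx0
      exact (hg.pos x hx0).not_ge (le_trans hx ht)
    rw [measure_mono_null hsub (measure_singleton 0), max_eq_right ht,
      zero_pow finrank_pos.ne', ENNReal.ofReal_zero, zero_mul]
  · have hscale : {x | g x ≤ t} = t • {x | g x ≤ 1} := by
      ext x
      rw [mem_smul_set_iff_inv_smul_mem₀ ht.ne', mem_ofPred_eq, mem_ofPred_eq,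
        hg.map_smul_of_nonneg (inv_nonneg.mpr ht.le), inv_mul_le_iff₀ ht, mul_one]
    rw [hscale, Measure.addHaar_smul_of_nonneg μ ht.le, max_eq_left ht.le]

lemma map_eq_withDensity [Nontrivial E] (hg : IsAnisotropicNorm g) :
    μ.map g = (volume.restrict (Ioi 0)).withDensity
      fun r => ENNReal.ofReal (finrank ℝ E * r ^ (finrank ℝ E - 1)) * μ {x | g x ≤ 1} := by
  set n := finrank ℝ E
  have hmeas : Measurable g := hg.continuous.measurable
  refine Measure.ext_of_Iic' _ _ (fun t => ?_) (fun t => ?_)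
  · rw [Measure.map_apply hmeas measurableSet_Iic]
    exact (hg.isBounded_setOf_le t).measure_lt_top.ne
  rw [Measure.map_apply hmeas measurableSet_Iic, withDensity_apply _ measurableSet_Iic,
    Measure.restrict_restrict measurableSet_Iic, Iic_inter_Ioi, lintegral_mul_const _ (by fun_prop)]
  change μ {x | g x ≤ t} = _
  rw [hg.measure_setOf_le μ t]
  congr 1
  rcases le_or_gt t 0 with ht | ht
  · rw [Ioc_eq_empty ht.not_gt, Measure.restrict_empty, lintegral_zero_measure, max_eq_right ht,
      zero_pow finrank_pos.ne', ENNReal.ofReal_zero]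
  have hderiv : ∀ r ∈ uIcc 0 t, HasDerivAt (fun r : ℝ => r ^ n) (n * r ^ (n - 1)) r :=
    fun r _ => hasDerivAt_pow n r
  have hint : IntervalIntegrable (fun r : ℝ => n * r ^ (n - 1)) volume 0 t := by
    apply Continuous.intervalIntegrable; fun_prop
  rw [← ofReal_integral_eq_lintegral_ofReal hint.1, ← intervalIntegral.integral_of_le ht.le,
    intervalIntegral.integral_eq_sub_of_hasDerivAt hderiv hint, max_eq_left ht.le,
    zero_pow finrank_pos.ne', sub_zero]
  filter_upwards [ae_restrict_mem measurableSet_Ioc] with r hr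
  exact mul_nonneg (Nat.cast_nonneg n) (pow_nonneg hr.1.le _)

lemma setIntegral_inv_pow [Nontrivial E] (hg : IsAnisotropicNorm g) {ρ δ : ℝ} (hρ : 0 < ρ)
    (hρδ : ρ ≤ δ) :
    ∫ x in {x | ρ < g x ∧ g x < δ}, (g x ^ finrank ℝ E)⁻¹ ∂μ
      = finrank ℝ E * μ.real {x | g x ≤ 1} * Real.log (δ / ρ) := by
  set n := finrank ℝ E
  have hdens : ∀ r ∈ Ioo ρ δ, (ENNReal.ofReal (n * r ^ (n - 1)) * μ {x | g x ≤ 1}).toReal •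
      (r ^ n)⁻¹ = n * μ.real {x | g x ≤ 1} * r⁻¹ := fun r hr => by
    have hr : 0 < r := hρ.trans hr.1
    have hrn : r ^ n = r ^ (n - 1) * r := by rw [← pow_succ, Nat.sub_add_cancel finrank_pos]
    rw [ENNReal.toReal_mul, ENNReal.toReal_ofReal (by positivity), smul_eq_mul, ← measureReal_def,
      hrn]
    field_simp
  have hpre : {x | ρ < g x ∧ g x < δ} = g ⁻¹' Ioo ρ δ := rfl
  rw [hpre, ← setIntegral_map (f := fun r : ℝ => (r ^ n)⁻¹) measurableSet_Ioo (by fun_prop)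
      hg.continuous.aemeasurable,
    hg.map_eq_withDensity μ, setIntegral_withDensity_eq_setIntegral_toReal_smul (by fun_prop)
      (ae_of_all _ fun _ => ENNReal.mul_lt_top ENNReal.ofReal_lt_top
        ((hg.isBounded_setOf_le 1).measure_lt_top)) _ measurableSet_Ioo,
    Measure.restrict_restrict measurableSet_Ioo,
    inter_eq_left.mpr (Ioo_subset_Ioi_self.trans (Ioi_subset_Ioi hρ.le)),
    setIntegral_congr_fun measurableSet_Ioo hdens, integral_const_mul,
    ← integral_Ioc_eq_integral_Ioo, ← intervalIntegral.integral_of_le hρδ,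
    integral_inv_of_pos hρ (hρ.trans_le hρδ)]

end IsAnisotropicNorm

theorem stmt15_general {N : ℕ} (hN : 2 ≤ N)
    (F Fo : Euc N → ℝ)
    (hFconv : ConvexOn ℝ Set.univ F)
    (hFhom : ∀ (t : ℝ) (x : Euc N), F (t • x) = |t| * F x)
    (hFpos : ∀ x : Euc N, x ≠ 0 → 0 < F x)
    (hFo : ∀ x, Fo x = sSup {r : ℝ | ∃ ξ, F ξ ≤ 1 ∧ r = ⟪x, ξ⟫})
    (hFosmooth : ContDiffOn ℝ 1 Fo {(0 : Euc N)}ᶜ)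
    (κ : ℝ) (hκ : κ = (volume {x : Euc N | Fo x ≤ 1}).toReal)
    (ρ δ : ℝ) (hρ : 0 < ρ) (hρδ : ρ < δ)
    (a b : ℝ)
    (h : Euc N → ℝ)
    (hh : ∀ x, h x = (a * (Real.log (Fo x) - Real.log ρ) +
      b * (Real.log δ - Real.log (Fo x))) / (Real.log δ - Real.log ρ)) :
    ∫ x in {x : Euc N | ρ < Fo x ∧ Fo x < δ}, F (gradient h x) ^ N
      = (N : ℝ) * κ * |b - a| ^ N / (Real.log (δ / ρ)) ^ (N - 1) := by
  have hF : IsAnisotropicNorm F := ⟨hFconv, hFhom, hFpos⟩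
  obtain rfl : Fo = dualGauge F := funext hFo
  have hFo := hF.isAnisotropicNorm_dualGauge
  have : Nontrivial (Euc N) := Module.nontrivial_of_finrank_pos (R := ℝ) (by simp; omega)
  set L := Real.log δ - Real.log ρ
  have hL : 0 < L := sub_pos.mpr (Real.log_lt_log hρ hρδ)
  have hgrad : ∀ x ∈ {x | ρ < dualGauge F x ∧ dualGauge F x < δ},
      F (gradient h x) ^ N = (|b - a| / L) ^ N * (dualGauge F x ^ N)⁻¹ := by
    rintro x ⟨hρx, -⟩
    set r := dualGauge F x
    have hr : 0 < r := hρ.trans hρx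
    have hx : x ≠ 0 := fun hx => by simp [r, hx, hFo.map_zero] at hr
    have hd : DifferentiableAt ℝ (dualGauge F) x := (hFosmooth.differentiableOn one_ne_zero)
      |>.differentiableAt (isOpen_compl_singleton.mem_nhds hx)
    have hφ : HasDerivAt (fun s => (a * (Real.log s - Real.log ρ) +
        b * (Real.log δ - Real.log s)) / L) ((a - b) / L * r⁻¹) r :=
      ((((hasDerivAt_log hr.ne').sub_const (Real.log ρ)).const_mul a).add
        (((hasDerivAt_log hr.ne').const_sub (Real.log δ)).const_mul b)).div_const L
        |>.congr_deriv (by ring)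
    rw [funext hh, hF.apply_gradient_comp_dualGauge hx hd hφ, abs_mul, abs_div, abs_of_pos hL,
      abs_inv, abs_of_pos hr, abs_sub_comm, mul_pow, inv_pow]
  have hA : MeasurableSet {x | ρ < dualGauge F x ∧ dualGauge F x < δ} :=
    hFo.continuous.measurable measurableSet_Ioo
  have hcap := hFo.setIntegral_inv_pow volume hρ hρδ.le
  rw [finrank_euclideanSpace_fin] at hcap
  rw [setIntegral_congr_fun hA hgrad, integral_const_mul, hcap,
    measureReal_def, ← hκ, Real.log_div (hρ.trans hρδ).ne' hρ.ne',
    ← Nat.sub_add_cancel (by omega : 1 ≤ N), pow_succ, Nat.add_sub_cancel]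
  field_simp
  ring

/-- Capacity of the anisotropic annulus: the explicit minimizer energy
`∫_{{ρ < F^o < δ}} F(∇h)^N dx = N κ_N |b-a|^N / (log(δ/ρ))^{N-1}`. -/
theorem stmt15 {N : ℕ} (hN : 2 ≤ N)
    (F Fo : Euc N → ℝ)
    (hF0 : ∀ x, 0 ≤ F x)
    (hFconv : ConvexOn ℝ Set.univ F)
    (hFeven : ∀ x, F (-x) = F x)
    (hFhom : ∀ (t : ℝ) (x : Euc N), F (t • x) = |t| * F x)
    (hFsmooth : ContDiffOn ℝ 2 F {(0 : Euc N)}ᶜ)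
    (hFpos : ∀ x : Euc N, x ≠ 0 → 0 < F x)
    (hFo : ∀ x, Fo x = sSup {r : ℝ | ∃ ξ, F ξ ≤ 1 ∧ r = ⟪x, ξ⟫})
    (hFosmooth : ContDiffOn ℝ 1 Fo {(0 : Euc N)}ᶜ)
    (κ : ℝ) (hκ : κ = (volume {x : Euc N | Fo x ≤ 1}).toReal)
    (ρ δ : ℝ) (hρ : 0 < ρ) (hρδ : ρ < δ)
    (a b : ℝ)
    (h : Euc N → ℝ)
    (hh : ∀ x, h x = (a * (Real.log (Fo x) - Real.log ρ) +
      b * (Real.log δ - Real.log (Fo x))) / (Real.log δ - Real.log ρ)) :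
    ∫ x in {x : Euc N | ρ < Fo x ∧ Fo x < δ}, F (gradient h x) ^ N
      = (N : ℝ) * κ * |b - a| ^ N / (Real.log (δ / ρ)) ^ (N - 1) :=
  stmt15_general hN F Fo hFconv hFhom hFpos hFo hFosmooth κ hκ ρ δ hρ hρδ a b h hh

end
end
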